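/- Let ρ_123 be a positive definite density on H_1 ⊗ H_2 ⊗ H_3 with reduced densities ρ_12, ρ_23, ρ_2 (all invertible), and let q > 0. Then S_q(ρ_123) + S_q(ρ_2) ≤ S_q(ρ_12) + S_q(ρ_23) if and only if S_{-ln_q}^U(ρ_123 || ρ_12 ⊗ I_3) ≥ S_{-ln_q}^V(ρ_23 || ρ_2 ⊗ I_3), where U = ρ_123^{(q-1)/2} and V = ρ_23^{(q-1)/2}. -/

import Mathlib

open Matrix Kronecker ComplexOrder

/-- The deformed logarithm (q-logarithm). -/
noncomputable def lnq (q x : ℝ) : ℝ := if q = 1 then Real.log x else (x ^ (q - 1) - 1) / (q - 1)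

/-- Tsallis entropy `S_q(ρ) = -Tr(ρ ln_q ρ)` of a Hermitian matrix, computed from eigenvalues. -/
noncomputable def tsallisEntropy (q : ℝ) {n : Type*} [Fintype n] [DecidableEq n]
    {ρ : Matrix n n ℂ} (hρ : ρ.IsHermitian) : ℝ :=
  -∑ i, hρ.eigenvalues i * lnq q (hρ.eigenvalues i)

/-- `f` applied to a Hermitian matrix via its spectral decomposition. -/
noncomputable def matFun (f : ℝ → ℝ) {n : Type*} [Fintype n] [DecidableEq n]
    {A : Matrix n n ℂ} (hA : A.IsHermitian) : Matrix n n ℂ :=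
  ∑ i, (f (hA.eigenvalues i) : ℂ) •
    Matrix.vecMulVec (hA.eigenvectorBasis i) (star (hA.eigenvectorBasis i))

/-- `f(Δ(σ/ρ))` for the relative modular operator `Δ(σ/ρ) : X ↦ σXρ⁻¹`, via the spectral
decompositions of `ρ` and `σ`. -/
noncomputable def fDelta (f : ℝ → ℝ) {n : Type*} [Fintype n] [DecidableEq n]
    {ρ σ : Matrix n n ℂ} (hρ : ρ.IsHermitian) (hσ : σ.IsHermitian)
    (X : Matrix n n ℂ) : Matrix n n ℂ :=
  ∑ j, ∑ k, (f (hσ.eigenvalues k / hρ.eigenvalues j) : ℂ) •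
    (Matrix.vecMulVec (hσ.eigenvectorBasis k) (star (hσ.eigenvectorBasis k)) * X *
      Matrix.vecMulVec (hρ.eigenvectorBasis j) (star (hρ.eigenvectorBasis j)))

/-- The positive semidefinite square root of a positive semidefinite matrix
(Mathlib's former `Matrix.PosSemidef.sqrt`, removed since; restated with its old definition). -/
noncomputable def Matrix.PosSemidef.sqrt {n : Type*} [Fintype n] [DecidableEq n]
    {A : Matrix n n ℂ} (hA : A.PosSemidef) : Matrix n n ℂ :=
  (hA.1.eigenvectorUnitary : Matrix n n ℂ) *
    diagonal (fun i => ((√(hA.1.eigenvalues i) : ℝ) : ℂ)) *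
    (star hA.1.eigenvectorUnitary : Matrix n n ℂ)

/-- The relative quasi-entropy `S_f^K(ρ||σ) = ⟨Kρ^{1/2}, f(Δ(σ/ρ))(Kρ^{1/2})⟩`. -/
noncomputable def quasiEntropy (f : ℝ → ℝ) {n : Type*} [Fintype n] [DecidableEq n]
    (K : Matrix n n ℂ) {ρ σ : Matrix n n ℂ} (hρ : ρ.PosDef) (hσ : σ.PosDef) : ℝ :=
  (((K * hρ.posSemidef.sqrt)ᴴ * fDelta f hρ.1 hσ.1 (K * hρ.posSemidef.sqrt)).trace).re

/-- Partial trace over the third tensor factor. -/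
noncomputable def ptrace3 {ι1 ι2 ι3 : Type*} [Fintype ι3]
    (A : Matrix (ι1 × ι2 × ι3) (ι1 × ι2 × ι3) ℂ) : Matrix (ι1 × ι2) (ι1 × ι2) ℂ :=
  fun x y => ∑ k, A (x.1, x.2, k) (y.1, y.2, k)

/-- Partial trace over the first tensor factor. -/
noncomputable def ptrace1 {ι1 ι2 ι3 : Type*} [Fintype ι1]
    (A : Matrix (ι1 × ι2 × ι3) (ι1 × ι2 × ι3) ℂ) : Matrix (ι2 × ι3) (ι2 × ι3) ℂ :=
  fun x y => ∑ i, A (i, x.1, x.2) (i, y.1, y.2)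

/-- Partial trace over the first and third tensor factors. -/
noncomputable def ptrace13 {ι1 ι2 ι3 : Type*} [Fintype ι1] [Fintype ι3]
    (A : Matrix (ι1 × ι2 × ι3) (ι1 × ι2 × ι3) ℂ) : Matrix ι2 ι2 ℂ :=
  fun x y => ∑ i, ∑ k, A (i, x, k) (i, y, k)

/-- `M ⊗ I₃`, a matrix on `H₁ ⊗ H₂` extended to `H₁ ⊗ H₂ ⊗ H₃`. -/
noncomputable def tensorI3 {ι1 ι2 ι3 : Type*} [DecidableEq ι3]
    (M : Matrix (ι1 × ι2) (ι1 × ι2) ℂ) : Matrix (ι1 × ι2 × ι3) (ι1 × ι2 × ι3) ℂ :=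
  fun x y => M (x.1, x.2.1) (y.1, y.2.1) * (if x.2.2 = y.2.2 then 1 else 0)

/-!
Expand `ρ = ∑ λⱼ |φⱼ⟩⟨φⱼ|` and `σ = ∑ μₖ |ψₖ⟩⟨ψₖ|`. With `U = ρ^{(q-1)/2}` the quasi-entropy is
`∑ⱼₖ λⱼ (-ln_q (μₖ/λⱼ)) λⱼ^{q-1} |⟨ψₖ|φⱼ⟩|²`, and `ln_q x - ln_q y = -ln_q (y/x) x^{q-1}` turns it
into `-S_q(ρ) - Tr(ρ ln_q σ)`. Once `matFun` is identified with the continuous functional calculus,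
`ln_q (ρ₁₂ ⊗ I₃) = ln_q ρ₁₂ ⊗ I₃` because `cfc` commutes with the star-algebra homomorphism
`A ↦ A ⊗ I₃`, so `Tr(ρ₁₂₃ ln_q (ρ₁₂ ⊗ I₃)) = Tr(ρ₁₂ ln_q ρ₁₂) = -S_q(ρ₁₂)`, and likewise for
`ρ₂₃` and `ρ₂ ⊗ I₃`. Both sides of the equivalence thus become the same linear inequality between
the four Tsallis entropies.
-/

namespace Matrix

section vecMulVec

variable {n : Type*} [Fintype n]

lemma trace_vecMulVec_star_mul (v : n → ℂ) (X : Matrix n n ℂ) :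
    (vecMulVec v (star v) * X).trace = star v ⬝ᵥ (X *ᵥ v) := by
  rw [vecMulVec_mul, trace_vecMulVec, dotProduct_comm, dotProduct_mulVec]

lemma star_dotProduct_vecMulVec_star_mulVec (v x : n → ℂ) :
    star x ⬝ᵥ (vecMulVec v (star v) *ᵥ x) = Complex.normSq (star v ⬝ᵥ x) := by
  rw [vecMulVec_mulVec, op_smul_eq_smul, dotProduct_smul, smul_eq_mul, star_dotProduct x v,
    Complex.star_def, Complex.mul_conj]

lemma normSq_star_dotProduct_comm (u v : n → ℂ) :
    Complex.normSq (star u ⬝ᵥ v) = Complex.normSq (star v ⬝ᵥ u) := by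
  rw [star_dotProduct, Complex.star_def, Complex.normSq_conj]

lemma trace_conjTranspose_mul_vecMulVec_mul_vecMulVec (X : Matrix n n ℂ) (u v : n → ℂ) :
    (Xᴴ * (vecMulVec u (star u) * X * vecMulVec v (star v))).trace =
      Complex.normSq (star u ⬝ᵥ (X *ᵥ v)) := by
  rw [← Matrix.mul_assoc, trace_mul_comm, trace_vecMulVec_star_mul, ← mulVec_mulVec,
    ← mulVec_mulVec, dotProduct_mulVec, ← star_mulVec, star_dotProduct_vecMulVec_star_mulVec]

end vecMulVec

namespace IsHermitian

variable {n : Type*} [Fintype n] [DecidableEq n] {A : Matrix n n ℂ}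

lemma star_eigenvectorBasis_dotProduct_self (hA : A.IsHermitian) (i : n) :
    star ⇑(hA.eigenvectorBasis i) ⬝ᵥ ⇑(hA.eigenvectorBasis i) = 1 := by
  rw [dotProduct_comm, ← EuclideanSpace.inner_eq_star_dotProduct, inner_self_eq_norm_sq_to_K,
    hA.eigenvectorBasis.orthonormal.1 i]
  simp

lemma matFun_eq_cfc (hA : A.IsHermitian) (f : ℝ → ℝ) : matFun f hA = cfc f A := by
  rw [hA.cfc_eq, IsHermitian.cfc, Unitary.conjStarAlgAut_apply]
  ext a b
  simp only [matFun, Matrix.sum_apply, smul_apply, vecMulVec_apply, mul_apply, diagonal_apply,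
    eigenvectorUnitary_apply, star_apply, Pi.star_apply, mul_ite, mul_zero, Finset.sum_ite_eq',
    Finset.mem_univ, if_true, Function.comp_apply, smul_eq_mul, Complex.coe_algebraMap]
  exact Finset.sum_congr rfl fun _ _ => by ring

lemma cfc_mulVec_eigenvectorBasis (hA : A.IsHermitian) (f : ℝ → ℝ) (j : n) :
    cfc f A *ᵥ ⇑(hA.eigenvectorBasis j) =
      (f (hA.eigenvalues j) : ℂ) • ⇑(hA.eigenvectorBasis j) := by
  rw [hA.cfc_eq, IsHermitian.cfc, Unitary.conjStarAlgAut_apply, ← mulVec_mulVec, ← mulVec_mulVec,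
    star_eigenvectorUnitary_mulVec, diagonal_mulVec_single, ← smul_eq_mul, Pi.single_smul',
    mulVec_smul, eigenvectorUnitary_mulVec]
  simp

lemma trace_cfc_mul (hA : A.IsHermitian) (g : ℝ → ℝ) (X : Matrix n n ℂ) :
    (cfc g A * X).trace = ∑ i, (g (hA.eigenvalues i) : ℂ) *
      (star ⇑(hA.eigenvectorBasis i) ⬝ᵥ (X *ᵥ ⇑(hA.eigenvectorBasis i))) := by
  simp only [← hA.matFun_eq_cfc, matFun, Finset.sum_mul, trace_sum, smul_mul_assoc, trace_smul,
    trace_vecMulVec_star_mul, smul_eq_mul]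

lemma star_dotProduct_cfc_mulVec (hA : A.IsHermitian) (g : ℝ → ℝ) (x : n → ℂ) :
    star x ⬝ᵥ (cfc g A *ᵥ x) =
      ↑(∑ i, g (hA.eigenvalues i) * Complex.normSq (star ⇑(hA.eigenvectorBasis i) ⬝ᵥ x)) := by
  simp only [← hA.matFun_eq_cfc, matFun, sum_mulVec, smul_mulVec, dotProduct_sum, dotProduct_smul,
    star_dotProduct_vecMulVec_star_mulVec, Complex.ofReal_sum, Complex.ofReal_mul, smul_eq_mul]

lemma sum_normSq_eigenvectorBasis_dotProduct (hA : A.IsHermitian) {x : n → ℂ}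
    (hx : star x ⬝ᵥ x = 1) :
    ∑ i, Complex.normSq (star ⇑(hA.eigenvectorBasis i) ⬝ᵥ x) = 1 := by
  have h := hA.star_dotProduct_cfc_mulVec 1 x
  rw [cfc_one ℝ A, one_mulVec, hx] at h
  simpa using congrArg Complex.re h.symm

lemma sum_eigenvalues_mul_normSq (hA : A.IsHermitian) (x : n → ℂ) :
    ∑ i, hA.eigenvalues i * Complex.normSq (star ⇑(hA.eigenvectorBasis i) ⬝ᵥ x) =
      (star x ⬝ᵥ (A *ᵥ x)).re := by
  conv_rhs => rw [← cfc_id' ℝ A, hA.star_dotProduct_cfc_mulVec, Complex.ofReal_re]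

end IsHermitian

lemma PosSemidef.sqrt_eq_cfc {n : Type*} [Fintype n] [DecidableEq n] {A : Matrix n n ℂ}
    (hA : A.PosSemidef) : hA.sqrt = cfc Real.sqrt A := by
  rw [hA.1.cfc_eq, IsHermitian.cfc, Unitary.conjStarAlgAut_apply]
  rfl

def partialTrace {n m κ : Type*} [Fintype m] (e : κ ≃ n × m) (X : Matrix κ κ ℂ) :
    Matrix n n ℂ :=
  of fun a b => ∑ c, X (e.symm (a, c)) (e.symm (b, c))

section ampliation

variable {n m κ : Type*} [Fintype n] [DecidableEq n] [Fintype m] [DecidableEq m]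
  [Fintype κ] [DecidableEq κ]

/-- `A ↦ A ⊗ I`, transported along `e` so that it also covers `tensorI3`, whose index type is
`ι₁ × (ι₂ × ι₃)` rather than `(ι₁ × ι₂) × ι₃`. -/
def ampliation (e : κ ≃ n × m) : Matrix n n ℂ →⋆ₐ[ℂ] Matrix κ κ ℂ where
  toFun A := (A ⊗ₖ (1 : Matrix m m ℂ)).submatrix e e
  map_one' := by rw [one_kronecker_one, submatrix_one_equiv]
  map_mul' A B := by rw [submatrix_mul_equiv, ← mul_kronecker_mul, one_mul]
  map_zero' := by rw [zero_kronecker, submatrix_zero]; rfl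
  map_add' A B := by rw [add_kronecker]; rfl
  commutes' c := by
    rw [Algebra.algebraMap_eq_smul_one, Algebra.algebraMap_eq_smul_one, smul_kronecker,
      one_kronecker_one, ← submatrix_one_equiv e]
    rfl
  map_star' A := by
    rw [star_eq_conjTranspose, star_eq_conjTranspose, conjTranspose_submatrix,
      conjTranspose_kronecker, conjTranspose_one]

lemma ampliation_apply (e : κ ≃ n × m) (A : Matrix n n ℂ) :
    ampliation e A = (A ⊗ₖ (1 : Matrix m m ℂ)).submatrix e e := rfl

lemma ampliation_refl (A : Matrix n n ℂ) :
    ampliation (Equiv.refl (n × m)) A = A ⊗ₖ (1 : Matrix m m ℂ) :=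
  submatrix_id_id _

lemma continuous_ampliation (e : κ ≃ n × m) : Continuous (ampliation e) :=
  (ampliation e).toAlgHom.toLinearMap.continuous_of_finiteDimensional

lemma trace_ampliation_mul (e : κ ≃ n × m) (A : Matrix n n ℂ) (X : Matrix κ κ ℂ) :
    (ampliation e A * X).trace = (A * partialTrace e X).trace := by
  simp only [trace, diag, mul_apply, ampliation_apply, submatrix_apply, partialTrace, of_apply]
  rw [← e.symm.sum_comp]
  simp only [← e.symm.sum_comp (fun y => _ * X y _), Equiv.apply_symm_apply, Fintype.sum_prod_type,
    kronecker_apply, one_apply, mul_ite, mul_one, mul_zero, Finset.mul_sum]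
  refine Finset.sum_congr rfl fun a _ => ?_
  rw [Finset.sum_comm]
  refine Finset.sum_congr rfl fun b _ => ?_
  simp only [ite_mul, zero_mul, Finset.sum_ite_eq, Finset.mem_univ, if_true]

lemma IsHermitian.cfc_ampliation (e : κ ≃ n × m) {A : Matrix n n ℂ} (hA : A.IsHermitian)
    (f : ℝ → ℝ) : cfc f (ampliation e A) = ampliation e (cfc f A) :=
  ((ampliation e).map_cfc f A (A.finite_real_spectrum.continuousOn f) (continuous_ampliation e)
    hA (hA.isSelfAdjoint.map _)).symm

end ampliation

end Matrix

lemma lnq_sub_lnq (q : ℝ) {x y : ℝ} (hx : 0 < x) (hy : 0 < y) :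
    lnq q x - lnq q y = -lnq q (y / x) * x ^ (q - 1) := by
  unfold lnq
  split_ifs with hq
  · rw [hq, sub_self, Real.rpow_zero, Real.log_div hy.ne' hx.ne']
    ring
  · have hxq : x ^ (q - 1) ≠ 0 := (Real.rpow_pos_of_pos hx _).ne'
    rw [Real.div_rpow hy.le hx.le]
    field_simp
    ring

lemma tsallisEntropy_eq_neg_re_trace (q : ℝ) {n : Type*} [Fintype n] [DecidableEq n]
    {B : Matrix n n ℂ} (hB : B.IsHermitian) :
    tsallisEntropy q hB = -(cfc (lnq q) B * B).trace.re := by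
  rw [tsallisEntropy, hB.trace_cfc_mul, Complex.re_sum]
  congr 1
  refine Finset.sum_congr rfl fun i _ => ?_
  rw [hB.mulVec_eigenvectorBasis, dotProduct_smul, hB.star_eigenvectorBasis_dotProduct_self,
    Complex.real_smul, mul_one, ← Complex.ofReal_mul, Complex.ofReal_re, mul_comm]

section quasiEntropy

variable {n : Type*} [Fintype n] [DecidableEq n]

lemma quasiEntropy_eq_sum (f : ℝ → ℝ) (K : Matrix n n ℂ) {ρ σ : Matrix n n ℂ}
    (hρ : ρ.PosDef) (hσ : σ.PosDef) :
    quasiEntropy f K hρ hσ =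
      ∑ j, ∑ k, hρ.1.eigenvalues j * f (hσ.1.eigenvalues k / hρ.1.eigenvalues j) *
        Complex.normSq (star ⇑(hσ.1.eigenvectorBasis k) ⬝ᵥ (K *ᵥ ⇑(hρ.1.eigenvectorBasis j))) := by
  have hsqrt : ∀ (j : n) (u : n → ℂ),
      Complex.normSq (u ⬝ᵥ ((K * hρ.posSemidef.sqrt) *ᵥ ⇑(hρ.1.eigenvectorBasis j))) =
        hρ.1.eigenvalues j * Complex.normSq (u ⬝ᵥ (K *ᵥ ⇑(hρ.1.eigenvectorBasis j))) := by
    intro j u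
    rw [← mulVec_mulVec, hρ.posSemidef.sqrt_eq_cfc, hρ.1.cfc_mulVec_eigenvectorBasis, mulVec_smul,
      dotProduct_smul, smul_eq_mul, Complex.normSq_mul, Complex.normSq_ofReal,
      Real.mul_self_sqrt (hρ.eigenvalues_pos j).le]
  simp only [quasiEntropy, fDelta, Finset.mul_sum, trace_sum, mul_smul_comm, trace_smul,
    trace_conjTranspose_mul_vecMulVec_mul_vecMulVec, hsqrt, smul_eq_mul,
    ← Complex.ofReal_mul, ← Complex.ofReal_sum, Complex.ofReal_re]
  exact Finset.sum_congr rfl fun j _ => Finset.sum_congr rfl fun k _ => by ring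

lemma quasiEntropy_neg_lnq (q : ℝ) {ρ σ : Matrix n n ℂ} (hρ : ρ.PosDef) (hσ : σ.PosDef) :
    quasiEntropy (fun x => -lnq q x) (matFun (fun x => x ^ ((q - 1) / 2)) hρ.1) hρ hσ =
      -tsallisEntropy q hρ.1 - (cfc (lnq q) σ * ρ).trace.re := by
  have hterm : ∀ j k, hρ.1.eigenvalues j * -lnq q (hσ.1.eigenvalues k / hρ.1.eigenvalues j) *
      Complex.normSq (star ⇑(hσ.1.eigenvectorBasis k) ⬝ᵥ
        (cfc (fun x : ℝ => x ^ ((q - 1) / 2)) ρ *ᵥ ⇑(hρ.1.eigenvectorBasis j))) =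
        (hρ.1.eigenvalues j * lnq q (hρ.1.eigenvalues j) -
          lnq q (hσ.1.eigenvalues k) * hρ.1.eigenvalues j) *
          Complex.normSq (star ⇑(hσ.1.eigenvectorBasis k) ⬝ᵥ ⇑(hρ.1.eigenvectorBasis j)) := by
    intro j k
    have hpos := hρ.eigenvalues_pos j
    rw [hρ.1.cfc_mulVec_eigenvectorBasis, dotProduct_smul, smul_eq_mul, Complex.normSq_mul,
      Complex.normSq_ofReal, ← Real.rpow_add hpos, add_halves]
    linear_combination (-hρ.1.eigenvalues j *
      Complex.normSq (star ⇑(hσ.1.eigenvectorBasis k) ⬝ᵥ ⇑(hρ.1.eigenvectorBasis j))) *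
      lnq_sub_lnq q hpos (hσ.eigenvalues_pos k)
  rw [quasiEntropy_eq_sum, hρ.1.matFun_eq_cfc]
  simp only [hterm, sub_mul, Finset.sum_sub_distrib]
  congr 1
  · rw [tsallisEntropy, neg_neg]
    refine Finset.sum_congr rfl fun j _ => ?_
    rw [← Finset.mul_sum, hσ.1.sum_normSq_eigenvectorBasis_dotProduct
      (hρ.1.star_eigenvectorBasis_dotProduct_self j), mul_one]
  · rw [hσ.1.trace_cfc_mul, Complex.re_sum, Finset.sum_comm]
    refine Finset.sum_congr rfl fun k _ => ?_
    rw [Complex.re_ofReal_mul, ← hρ.1.sum_eigenvalues_mul_normSq, Finset.mul_sum]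
    refine Finset.sum_congr rfl fun j _ => ?_
    rw [normSq_star_dotProduct_comm]
    ring

end quasiEntropy

lemma tensorI3_eq_ampliation {ι1 ι2 ι3 : Type*} [Fintype ι1] [DecidableEq ι1] [Fintype ι2]
    [DecidableEq ι2] [Fintype ι3] [DecidableEq ι3] (M : Matrix (ι1 × ι2) (ι1 × ι2) ℂ) :
    tensorI3 M = ampliation (Equiv.prodAssoc ι1 ι2 ι3).symm M := by
  ext x y
  simp [tensorI3, ampliation_apply, one_apply]

lemma ptrace3_eq_partialTrace {ι1 ι2 ι3 : Type*} [Fintype ι3]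
    (A : Matrix (ι1 × ι2 × ι3) (ι1 × ι2 × ι3) ℂ) :
    ptrace3 A = partialTrace (Equiv.prodAssoc ι1 ι2 ι3).symm A := rfl

lemma ptrace13_eq_partialTrace_ptrace1 {ι1 ι2 ι3 : Type*} [Fintype ι1] [Fintype ι3]
    (A : Matrix (ι1 × ι2 × ι3) (ι1 × ι2 × ι3) ℂ) :
    ptrace13 A = partialTrace (Equiv.refl _) (ptrace1 A) := by
  ext a b
  exact Finset.sum_comm

theorem tsallis_ssa_iff_quasiEntropy_general (q : ℝ) {d1 d2 d3 : ℕ}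
    (ρ : Matrix (Fin d1 × Fin d2 × Fin d3) (Fin d1 × Fin d2 × Fin d3) ℂ)
    (hρ : ρ.PosDef)
    (h12 : (ptrace3 ρ).PosDef) (h23 : (ptrace1 ρ).PosDef) (h2 : (ptrace13 ρ).PosDef)
    (h12I : (tensorI3 (ptrace3 ρ)).PosDef)
    (h2I : ((ptrace13 ρ) ⊗ₖ (1 : Matrix (Fin d3) (Fin d3) ℂ)).PosDef) :
    tsallisEntropy q hρ.1 + tsallisEntropy q h2.1 ≤
        tsallisEntropy q h12.1 + tsallisEntropy q h23.1 ↔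
      quasiEntropy (fun x => -lnq q x) (matFun (fun x => x ^ ((q - 1) / 2)) hρ.1) hρ h12I ≥
        quasiEntropy (fun x => -lnq q x) (matFun (fun x => x ^ ((q - 1) / 2)) h23.1) h23 h2I := by
  rw [ge_iff_le, quasiEntropy_neg_lnq, quasiEntropy_neg_lnq, tensorI3_eq_ampliation,
    ← ampliation_refl, h12.1.cfc_ampliation, h2.1.cfc_ampliation, trace_ampliation_mul,
    trace_ampliation_mul, ← ptrace3_eq_partialTrace, ← ptrace13_eq_partialTrace_ptrace1]
  have hS12 := tsallisEntropy_eq_neg_re_trace q h12.1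
  have hS2 := tsallisEntropy_eq_neg_re_trace q h2.1
  constructor <;> intro h <;> linarith

/-- Theorem 1: the strong subadditivity inequality of the Tsallis entropy is equivalent to a
quasi-entropy inequality: `S_q(ρ₁₂₃)+S_q(ρ₂) ≤ S_q(ρ₁₂)+S_q(ρ₂₃)` iff
`S_{-ln_q}^U(ρ₁₂₃||ρ₁₂⊗I₃) ≥ S_{-ln_q}^V(ρ₂₃||ρ₂⊗I₃)`, where `U = ρ₁₂₃^{(q-1)/2}` and
`V = ρ₂₃^{(q-1)/2}`. -/
theorem tsallis_ssa_iff_quasiEntropy (q : ℝ) (hq : 0 < q) {d1 d2 d3 : ℕ}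
    (ρ : Matrix (Fin d1 × Fin d2 × Fin d3) (Fin d1 × Fin d2 × Fin d3) ℂ)
    (hρ : ρ.PosDef) (htr : ρ.trace = 1)
    (h12 : (ptrace3 ρ).PosDef) (h23 : (ptrace1 ρ).PosDef) (h2 : (ptrace13 ρ).PosDef)
    (h12I : (tensorI3 (ptrace3 ρ)).PosDef)
    (h2I : ((ptrace13 ρ) ⊗ₖ (1 : Matrix (Fin d3) (Fin d3) ℂ)).PosDef) :
    tsallisEntropy q hρ.1 + tsallisEntropy q h2.1 ≤
        tsallisEntropy q h12.1 + tsallisEntropy q h23.1 ↔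
      quasiEntropy (fun x => -lnq q x) (matFun (fun x => x ^ ((q - 1) / 2)) hρ.1) hρ h12I ≥
        quasiEntropy (fun x => -lnq q x) (matFun (fun x => x ^ ((q - 1) / 2)) h23.1) h23 h2I :=
  tsallis_ssa_iff_quasiEntropy_general q ρ hρ h12 h23 h2 h12I h2I
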